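/- Let K be a field. The ideal ⟨X³ + Y³, X²Y, XY²⟩ of K[X, Y] is an atom of the monoid of nonzero ideals of K[X, Y] under ideal multiplication: whenever it equals a product I·J of two ideals, then I or J is the unit ideal. -/

import Mathlib

/-!
Write `𝔪 = ⟨X, Y⟩` and `𝔞` for the ideal. Since `X⁴, Y⁴ ∈ 𝔞`, every proper ideal containing `𝔞`
lies in `𝔪`. Suppose `𝔞 = I J` with `I, J` proper and `f₀ ∈ I \ 𝔪²`, with linear part
`ℓ₀ ≠ 0`. The quadratic part of `f₀ g ∈ 𝔞 ⊆ 𝔪³` is `ℓ₀ · (linear part of g)`, so `J ⊆ 𝔪²`.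
Then the cubic parts of `𝔞`, which form the span `W` of the three generators, are spanned by the
products `ℓ q` of linear parts `ℓ` of `I` and quadratic parts `q` of `J`, and each such product
lies in `W`. If all linear parts of `I` vanish at the zero `P ≠ 0` of `ℓ₀`, so do the
generators, but their only common zero is `0`. Otherwise the linear parts of `I` include `X`;
as elements of `W` have equal `X³` and `Y³` coefficients, `X q ∈ W` kills the `X²` coefficient
of every `q`, hence the `X³` coefficient of every `ℓ q`, contradicting `X³ + Y³ ∈ W`.
So `I, J ⊆ 𝔪²` and `X²Y ∈ I J ⊆ 𝔪⁴`, which is absurd.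
-/

open MvPolynomial

namespace MvPolynomial

section CommSemiring

variable {σ R : Type*} [CommSemiring R]

theorem homogeneousComponent_eq_zero_of_mem_pow_idealOfVars {n k : ℕ} {p : MvPolynomial σ R}
    (hp : p ∈ idealOfVars σ R ^ n) (hk : k < n) : homogeneousComponent k p = 0 := by
  ext d
  rw [coeff_homogeneousComponent, coeff_zero]
  split_ifs with hd
  · exact (mem_pow_idealOfVars_iff' n p).1 hp d (hd ▸ hk)
  · rfl

theorem mem_pow_idealOfVars_succ_iff {n : ℕ} {p : MvPolynomial σ R} :
    p ∈ idealOfVars σ R ^ (n + 1) ↔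
      p ∈ idealOfVars σ R ^ n ∧ homogeneousComponent n p = 0 := by
  refine ⟨fun hp => ⟨Ideal.pow_le_pow_right n.le_succ hp,
    homogeneousComponent_eq_zero_of_mem_pow_idealOfVars hp n.lt_succ_self⟩, ?_⟩
  rintro ⟨hp, hn⟩
  rw [mem_pow_idealOfVars_iff'] at hp ⊢
  intro d hd
  rcases Nat.lt_succ_iff_lt_or_eq.1 hd with hd | hd
  · exact hp d hd
  · simpa [coeff_homogeneousComponent, hd] using congr_arg (coeff d) hn

theorem IsHomogeneous.mem_pow_idealOfVars {n : ℕ} {p : MvPolynomial σ R}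
    (hp : p.IsHomogeneous n) : p ∈ idealOfVars σ R ^ n :=
  (mem_pow_idealOfVars_iff' n p).2 fun _ hd => hp.coeff_eq_zero hd.ne

theorem homogeneousComponent_add_mul {i j : ℕ} {f g : MvPolynomial σ R}
    (hf : f ∈ idealOfVars σ R ^ i) (hg : g ∈ idealOfVars σ R ^ j) :
    homogeneousComponent (i + j) (f * g) =
      homogeneousComponent i f * homogeneousComponent j g := by
  classical
  rw [mem_pow_idealOfVars_iff'] at hf hg
  ext d
  simp only [coeff_homogeneousComponent, coeff_mul]
  have hdeg : ∀ uv ∈ Finset.HasAntidiagonal.antidiagonal d,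
      uv.1.degree + uv.2.degree = d.degree :=
    fun uv huv => by rw [← map_add, Finset.HasAntidiagonal.mem_antidiagonal.1 huv]
  split_ifs with hd
  · refine Finset.sum_congr rfl fun uv huv => ?_
    have := hdeg uv huv
    rcases lt_trichotomy uv.1.degree i with hu | hu | hu
    · simp [hf _ hu, hu.ne]
    · simp [hu, show uv.2.degree = j by omega]
    · simp [hg uv.2 (by omega), hu.ne']
  · refine (Finset.sum_eq_zero fun uv huv => ?_).symm
    have := hdeg uv huv
    by_cases hu : uv.1.degree = i
    · simp [hu, show uv.2.degree ≠ j by omega]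
    · simp [hu]

theorem homogeneousComponent_add_mem_of_mem_mul {I J : Ideal (MvPolynomial σ R)} {i j : ℕ}
    (hI : I ≤ idealOfVars σ R ^ i) (hJ : J ≤ idealOfVars σ R ^ j)
    {V : Submodule R (MvPolynomial σ R)}
    (hV : ∀ f ∈ I, ∀ g ∈ J, homogeneousComponent i f * homogeneousComponent j g ∈ V)
    {h : MvPolynomial σ R} (hh : h ∈ I * J) : homogeneousComponent (i + j) h ∈ V := by
  refine Submodule.mul_induction_on hh (fun f hf g hg => ?_) fun x y hx hy => ?_
  · rw [homogeneousComponent_add_mul (hI hf) (hJ hg)]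
    exact hV f hf g hg
  · rw [map_add]
    exact V.add_mem hx hy

theorem homogeneousComponent_mem_span_of_mem_ideal_span {s : Set (MvPolynomial σ R)} {n : ℕ}
    (hs : ∀ p ∈ s, p.IsHomogeneous n) {f : MvPolynomial σ R} (hf : f ∈ Ideal.span s) :
    homogeneousComponent n f ∈ Submodule.span R s := by
  have hle : Ideal.span s ≤ idealOfVars σ R ^ n :=
    Ideal.span_le.2 fun p hp => (hs p hp).mem_pow_idealOfVars
  induction hf using Submodule.span_induction with
  | mem p hp =>
    rw [homogeneousComponent_eq_self (hs p hp)]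
    exact Submodule.subset_span hp
  | zero => simp
  | add x y _ _ hx hy =>
    rw [map_add]
    exact add_mem hx hy
  | smul r x hx ihx =>
    have hrx := homogeneousComponent_add_mul (i := 0) (f := r) (by simp) (hle hx)
    rw [zero_add, homogeneousComponent_zero, ← smul_eq_C_mul] at hrx
    rw [smul_eq_mul, hrx]
    exact Submodule.smul_mem _ _ ihx

theorem mem_pow_idealOfVars_succ_of_mul_mem [NoZeroDivisors R] {i j : ℕ}
    {f g : MvPolynomial σ R} (hf : f ∈ idealOfVars σ R ^ i) (hf' : f ∉ idealOfVars σ R ^ (i + 1))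
    (hg : g ∈ idealOfVars σ R ^ j) (hfg : f * g ∈ idealOfVars σ R ^ (i + j + 1)) :
    g ∈ idealOfVars σ R ^ (j + 1) := by
  rw [mem_pow_idealOfVars_succ_iff] at hf' hfg ⊢
  refine ⟨hg, (mul_eq_zero.1 ?_).resolve_left fun h => hf' ⟨hf, h⟩⟩
  rw [← homogeneousComponent_add_mul hf hg]
  exact hfg.2

theorem coeff_single_add_one_mul {ℓ : MvPolynomial σ R} (hℓ : ℓ.IsHomogeneous 1)
    (q : MvPolynomial σ R) (i : σ) (n : ℕ) :
    coeff (Finsupp.single i (n + 1)) (ℓ * q) =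
      coeff (Finsupp.single i 1) ℓ * coeff (Finsupp.single i n) q := by
  classical
  rw [← mem_homogeneousSubmodule, homogeneousSubmodule_one_eq_span_X] at hℓ
  induction hℓ using Submodule.span_induction with
  | mem p hp =>
    obtain ⟨j, rfl⟩ := hp
    rw [coeff_X]
    by_cases hj : j = i
    · subst hj
      rw [Finsupp.single_add, add_comm, coeff_X_mul, if_pos rfl, one_mul]
    · rw [coeff_X_mul', if_neg (by simp [Ne.symm hj]),
        if_neg ((Finsupp.single_left_inj one_ne_zero).not.2 hj), zero_mul]
  | zero => simp
  | add x y _ _ hx hy => rw [add_mul, coeff_add, coeff_add, hx, hy, add_mul]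
  | smul r x _ hx =>
    rw [smul_mul_assoc, coeff_smul, coeff_smul, hx, smul_eq_mul, smul_eq_mul, mul_assoc]

theorem IsHomogeneous.exists_eq_smul_X_zero_add_smul_X_one {ℓ : MvPolynomial (Fin 2) R}
    (hℓ : ℓ.IsHomogeneous 1) : ∃ a b : R, ℓ = a • X 0 + b • X 1 := by
  have hX : Set.range (X : Fin 2 → MvPolynomial (Fin 2) R) = {X 0, X 1} := by
    ext p
    simp [Fin.exists_fin_two, eq_comm]
  rw [← mem_homogeneousSubmodule, homogeneousSubmodule_one_eq_span_X, hX,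
    Submodule.mem_span_pair] at hℓ
  obtain ⟨a, b, h⟩ := hℓ
  exact ⟨a, b, h.symm⟩

theorem eq_zero_of_idealOfVars_le_radical [IsReduced R] {s : Set (MvPolynomial σ R)}
    (hs : idealOfVars σ R ≤ (Ideal.span s).radical) {P : σ → R}
    (hP : ∀ p ∈ s, eval P p = 0) : P = 0 := by
  funext i
  obtain ⟨n, hn⟩ := hs (Ideal.subset_span ⟨i, rfl⟩)
  have hPn : X i ^ n ∈ RingHom.ker (eval P) := Ideal.span_le.2 (fun p hp => hP p hp) hn
  rw [RingHom.mem_ker, map_pow, eval_X] at hPn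
  exact IsReduced.eq_zero _ ⟨n, hPn⟩

end CommSemiring

section Field

variable {σ K : Type*} [Field K]

theorem idealOfVars_isMaximal : (idealOfVars σ K).IsMaximal := by
  have hker : RingHom.ker (constantCoeff : MvPolynomial σ K →+* K) = idealOfVars σ K := by
    ext p
    rw [← pow_one (idealOfVars σ K), mem_pow_idealOfVars_iff']
    simp [Finsupp.degree_eq_zero_iff, constantCoeff_eq]
  exact hker ▸ RingHom.ker_isMaximal_of_surjective _ fun c => ⟨C c, constantCoeff_C σ c⟩

theorem le_idealOfVars_of_idealOfVars_le_radical {I : Ideal (MvPolynomial σ K)} (hI : I ≠ ⊤)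
    (h : idealOfVars σ K ≤ I.radical) : I ≤ idealOfVars σ K :=
  idealOfVars_isMaximal.eq_of_le (mt Ideal.radical_eq_top.1 hI) h ▸ I.le_radical

end Field

end MvPolynomial

section Cubic

variable {K : Type*} [Field K]

local notation "𝔪" => idealOfVars (Fin 2) K

variable (K) in
def cubicGens : Set (MvPolynomial (Fin 2) K) :=
  {X 0 ^ 3 + X 1 ^ 3, X 0 ^ 2 * X 1, X 0 * X 1 ^ 2}

theorem isHomogeneous_of_mem_cubicGens {p : MvPolynomial (Fin 2) K} (hp : p ∈ cubicGens K) :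
    p.IsHomogeneous 3 := by
  rcases hp with rfl | rfl | rfl
  · exact (isHomogeneous_X_pow 0 3).add (isHomogeneous_X_pow 1 3)
  · exact (isHomogeneous_X_pow 0 2).mul (isHomogeneous_X K 1)
  · exact (isHomogeneous_X K 0).mul (isHomogeneous_X_pow 1 2)

theorem span_cubicGens_le_pow_three : Ideal.span (cubicGens K) ≤ 𝔪 ^ 3 :=
  Ideal.span_le.2 fun _ hp => (isHomogeneous_of_mem_cubicGens hp).mem_pow_idealOfVars

theorem idealOfVars_le_radical_span_cubicGens : 𝔪 ≤ (Ideal.span (cubicGens K)).radical := by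
  have mem : ∀ p ∈ cubicGens K, p ∈ Ideal.span (cubicGens K) := fun p hp => Ideal.subset_span hp
  refine Ideal.span_le.2 (Set.range_subset_iff.2 (Fin.forall_fin_two.2 ⟨⟨4, ?_⟩, ⟨4, ?_⟩⟩))
  · rw [show (X 0 : MvPolynomial (Fin 2) K) ^ 4 =
        X 0 * (X 0 ^ 3 + X 1 ^ 3) - X 1 * (X 0 * X 1 ^ 2) by ring]
    exact sub_mem (Ideal.mul_mem_left _ _ (mem _ (by simp [cubicGens])))
      (Ideal.mul_mem_left _ _ (mem _ (by simp [cubicGens])))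
  · rw [show (X 1 : MvPolynomial (Fin 2) K) ^ 4 =
        X 1 * (X 0 ^ 3 + X 1 ^ 3) - X 0 * (X 0 ^ 2 * X 1) by ring]
    exact sub_mem (Ideal.mul_mem_left _ _ (mem _ (by simp [cubicGens])))
      (Ideal.mul_mem_left _ _ (mem _ (by simp [cubicGens])))

theorem le_idealOfVars_of_span_cubicGens_le {I : Ideal (MvPolynomial (Fin 2) K)} (hI : I ≠ ⊤)
    (h : Ideal.span (cubicGens K) ≤ I) : I ≤ 𝔪 :=
  le_idealOfVars_of_idealOfVars_le_radical hI
    (idealOfVars_le_radical_span_cubicGens.trans (Ideal.radical_mono h))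

theorem coeff_eq_of_mem_span_cubicGens {w : MvPolynomial (Fin 2) K}
    (hw : w ∈ Submodule.span K (cubicGens K)) :
    coeff (Finsupp.single 0 3) w = coeff (Finsupp.single 1 3) w := by
  induction hw using Submodule.span_induction with
  | mem p hp =>
    rcases hp with rfl | rfl | rfl <;>
      simp [coeff_X_pow, coeff_mul_X', coeff_X_mul', Finsupp.ext_iff, Fin.forall_fin_two]
  | zero => simp
  | add x y _ _ hx hy => rw [coeff_add, coeff_add, hx, hy]
  | smul r x _ hx => rw [coeff_smul, coeff_smul, hx]

variable {I J : Ideal (MvPolynomial (Fin 2) K)}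

theorem homogeneousComponent_one_mul_two_mem_span_cubicGens
    (h : Ideal.span (cubicGens K) = I * J) (hI : I ≤ 𝔪) (hJ : J ≤ 𝔪 ^ 2)
    {f g : MvPolynomial (Fin 2) K} (hf : f ∈ I) (hg : g ∈ J) :
    homogeneousComponent 1 f * homogeneousComponent 2 g ∈ Submodule.span K (cubicGens K) := by
  rw [← homogeneousComponent_add_mul ((pow_one 𝔪).symm ▸ hI hf) (hJ hg)]
  exact homogeneousComponent_mem_span_of_mem_ideal_span
    (fun _ => isHomogeneous_of_mem_cubicGens) (h ▸ Ideal.mul_mem_mul hf hg)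

theorem span_cubicGens_le_of_forall_mul_mem
    (h : Ideal.span (cubicGens K) = I * J) (hI : I ≤ 𝔪) (hJ : J ≤ 𝔪 ^ 2)
    {V : Submodule K (MvPolynomial (Fin 2) K)}
    (hV : ∀ f ∈ I, ∀ g ∈ J, homogeneousComponent 1 f * homogeneousComponent 2 g ∈ V) :
    Submodule.span K (cubicGens K) ≤ V := by
  refine Submodule.span_le.2 fun p hp => ?_
  have := homogeneousComponent_add_mem_of_mem_mul ((pow_one 𝔪).symm ▸ hI) hJ hV
    (h ▸ Ideal.subset_span hp)
  rwa [homogeneousComponent_eq_self (isHomogeneous_of_mem_cubicGens hp)] at this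

theorem eq_zero_of_forall_eval_homogeneousComponent_one_eq_zero
    (h : Ideal.span (cubicGens K) = I * J) (hI : I ≤ 𝔪) (hJ : J ≤ 𝔪 ^ 2) {P : Fin 2 → K}
    (hP : ∀ f ∈ I, eval P (homogeneousComponent 1 f) = 0) : P = 0 := by
  refine eq_zero_of_idealOfVars_le_radical idealOfVars_le_radical_span_cubicGens fun p hp => ?_
  have hle := span_cubicGens_le_of_forall_mul_mem h hI hJ
    (V := LinearMap.ker (aeval P).toLinearMap) fun f hf g _ => by simp [hP f hf]
  simpa using hle (Submodule.subset_span hp)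

theorem not_exists_homogeneousComponent_one_eq_X_zero
    (h : Ideal.span (cubicGens K) = I * J) (hI : I ≤ 𝔪) (hJ : J ≤ 𝔪 ^ 2) :
    ¬∃ f ∈ I, homogeneousComponent 1 f = X 0 := by
  rintro ⟨f₀, hf₀, hX⟩
  have hq : ∀ g ∈ J, coeff (Finsupp.single 0 2) (homogeneousComponent 2 g) = 0 := fun g hg => by
    have := coeff_eq_of_mem_span_cubicGens
      (homogeneousComponent_one_mul_two_mem_span_cubicGens h hI hJ hf₀ hg)
    rw [hX, coeff_single_add_one_mul (isHomogeneous_X K 0),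
      coeff_single_add_one_mul (isHomogeneous_X K 0)] at this
    simpa [coeff_X, Finsupp.single_eq_single_iff] using this
  have hle := span_cubicGens_le_of_forall_mul_mem h hI hJ
    (V := LinearMap.ker (lcoeff K (Finsupp.single 0 3))) fun f _ g hg => by
      simp [coeff_single_add_one_mul (homogeneousComponent_isHomogeneous 1 f), hq g hg]
  have := hle (Submodule.subset_span (show X 0 ^ 3 + X 1 ^ 3 ∈ cubicGens K by simp [cubicGens]))
  simp [coeff_X_pow, Finsupp.single_eq_single_iff] at this

theorem le_idealOfVars_sq_of_span_cubicGens_eq_mul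
    (h : Ideal.span (cubicGens K) = I * J) (hI : I ≤ 𝔪) (hJ : J ≤ 𝔪) : I ≤ 𝔪 ^ 2 := by
  intro f₀ hf₀
  by_contra hf₀2
  have hf₀1 : f₀ ∈ 𝔪 ^ 1 := (pow_one 𝔪).symm ▸ hI hf₀
  have hJ2 : J ≤ 𝔪 ^ 2 := fun g hg =>
    mem_pow_idealOfVars_succ_of_mul_mem hf₀1 hf₀2 ((pow_one 𝔪).symm ▸ hJ hg)
      (span_cubicGens_le_pow_three (h ▸ Ideal.mul_mem_mul hf₀ hg))
  obtain ⟨a, b, hab⟩ :=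
    (homogeneousComponent_isHomogeneous 1 f₀).exists_eq_smul_X_zero_add_smul_X_one
  -- `![b, -a]` is a nonzero zero of the linear part `a X + b Y` of `f₀`.
  by_cases hP : ∀ f ∈ I, eval ![b, -a] (homogeneousComponent 1 f) = 0
  · have hba := eq_zero_of_forall_eval_homogeneousComponent_one_eq_zero h hI hJ2 hP
    have hb : b = 0 := congr_fun hba 0
    have ha : a = 0 := neg_eq_zero.1 (congr_fun hba 1)
    exact hf₀2 (mem_pow_idealOfVars_succ_iff.2 ⟨hf₀1, by simp [hab, ha, hb]⟩)
  · push Not at hP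
    obtain ⟨f₁, hf₁, hne⟩ := hP
    obtain ⟨c, d, hcd⟩ :=
      (homogeneousComponent_isHomogeneous 1 f₁).exists_eq_smul_X_zero_add_smul_X_one
    have he : c * b - d * a ≠ 0 := by simpa [hcd, sub_eq_add_neg] using hne
    set e := c * b - d * a
    refine not_exists_homogeneousComponent_one_eq_X_zero h hI hJ2 ⟨(-d / e) • f₀ + (b / e) • f₁,
      I.add_mem (Submodule.smul_of_tower_mem _ _ hf₀) (Submodule.smul_of_tower_mem _ _ hf₁), ?_⟩
    rw [map_add, map_smul, map_smul, hab, hcd]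
    match_scalars <;> field_simp <;> ring

end Cubic

/-- The ideal `⟨X³ + Y³, X²Y, XY²⟩` of `K[X, Y]` is an atom of the monoid of nonzero
ideals under ideal multiplication: whenever it equals a product `I·J`, then `I` or `J`
is the unit ideal. -/
theorem span_cubic_atom {K : Type*} [Field K]
    (I J : Ideal (MvPolynomial (Fin 2) K))
    (h : Ideal.span {(X 0 : MvPolynomial (Fin 2) K) ^ 3 + (X 1 : MvPolynomial (Fin 2) K) ^ 3,
        (X 0 : MvPolynomial (Fin 2) K) ^ 2 * X 1,
        (X 0 : MvPolynomial (Fin 2) K) * (X 1 : MvPolynomial (Fin 2) K) ^ 2} = I * J) :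
    I = ⊤ ∨ J = ⊤ := by
  change Ideal.span (cubicGens K) = I * J at h
  by_contra! hIJ
  have hI := le_idealOfVars_of_span_cubicGens_le hIJ.1 (h ▸ Ideal.mul_le_left)
  have hJ := le_idealOfVars_of_span_cubicGens_le hIJ.2 (h ▸ Ideal.mul_le_right)
  have hI2 := le_idealOfVars_sq_of_span_cubicGens_eq_mul h hI hJ
  have hJ2 := le_idealOfVars_sq_of_span_cubicGens_eq_mul (h.trans (mul_comm I J)) hJ hI
  have hg : X 0 ^ 2 * X 1 ∈ cubicGens K := by simp [cubicGens]
  have h4 : X 0 ^ 2 * X 1 ∈ idealOfVars (Fin 2) K ^ (2 + 2) :=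
    pow_add (idealOfVars (Fin 2) K) 2 2 ▸ Ideal.mul_mono hI2 hJ2 (h ▸ Ideal.subset_span hg)
  have h3 := homogeneousComponent_eq_zero_of_mem_pow_idealOfVars h4 (by norm_num : 3 < 2 + 2)
  rw [homogeneousComponent_eq_self (isHomogeneous_of_mem_cubicGens hg)] at h3
  exact mul_ne_zero (pow_ne_zero 2 (X_ne_zero 0)) (X_ne_zero 1) h3
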